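/- arXiv:2511.18721 — 3 statements merged into one kernel-verified Lean document; each statement's English description precedes it below -/
import Mathlib

section
/- Let m_G, m_S, M, k be natural numbers with m = m_G + m_S, M ≤ m, and k ≤ min(M, m_S), and let ε ∈ [0,1] be real. Let (Ω, μ) be a probability space, B ⊆ Ω a measurable event, and X : Ω → ℕ a measurable random variable whose law is hypergeometric: for every natural number i, μ({ω : X ω = i}) = (C(m_S, i) · C(m − m_S, M − i)) / C(m, M), where C(n, r) denotes the binomial coefficient (with C(n, r) = 0 when r > n). Assume that for every i with k ≤ i one has μ(B ∩ {ω : X ω = i}) ≤ ε · μ({ω : X ω = i}). Then μ(Bᶜ) ≥ (1 − ε) · ∑_{i=k}^{min(M, m_S)} (C(m_S, i) · C(m − m_S, M − i)) / C(m, M). -/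
open MeasureTheory Finset

theorem swap_certificate_lower_bound
    (m_G m_S M k m : ℕ) (hm : m = m_G + m_S) (hM : M ≤ m) (hk : k ≤ min M m_S)
    (ε : ℝ) (hε0 : 0 ≤ ε) (hε1 : ε ≤ 1)
    {Ω : Type*} [MeasurableSpace Ω] (μ : Measure Ω) [IsProbabilityMeasure μ]
    (B : Set Ω) (hB : MeasurableSet B)
    (X : Ω → ℕ) (hX : Measurable X)
    (hlaw : ∀ i : ℕ, (μ {ω | X ω = i}).toReal =
      (Nat.choose m_S i * Nat.choose (m - m_S) (M - i) : ℝ) / Nat.choose m M)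
    (hcond : ∀ i : ℕ, k ≤ i →
      (μ (B ∩ {ω | X ω = i})).toReal ≤ ε * (μ {ω | X ω = i}).toReal) :
    (1 - ε) * ∑ i ∈ Finset.Icc k (min M m_S),
        (Nat.choose m_S i * Nat.choose (m - m_S) (M - i) : ℝ) / Nat.choose m M
      ≤ (μ Bᶜ).toReal := by
  have hSm : ∀ i : ℕ, MeasurableSet {ω | X ω = i} :=
    fun i => hX (measurableSet_singleton i)
  have hkey : ∀ i ∈ Finset.Icc k (min M m_S),
      (1 - ε) * ((Nat.choose m_S i * Nat.choose (m - m_S) (M - i) : ℝ) / Nat.choose m M)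
        ≤ (μ (Bᶜ ∩ {ω | X ω = i})).toReal := by
    intro i hi
    have hik : k ≤ i := (Finset.mem_Icc.mp hi).1
    have hsplit : μ (B ∩ {ω | X ω = i}) + μ (Bᶜ ∩ {ω | X ω = i}) = μ {ω | X ω = i} := by
      rw [Set.inter_comm B, Set.inter_comm Bᶜ, ← Set.diff_eq]
      exact measure_inter_add_diff _ hB
    have h1 : (μ (B ∩ {ω | X ω = i})).toReal + (μ (Bᶜ ∩ {ω | X ω = i})).toReal
        = (μ {ω | X ω = i}).toReal := by
      rw [← ENNReal.toReal_add (measure_ne_top _ _) (measure_ne_top _ _), hsplit]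
    have h2 := hcond i hik
    have h3 := hlaw i
    nlinarith [h1, h2, h3]
  have hdisj : (↑(Finset.Icc k (min M m_S)) : Set ℕ).PairwiseDisjoint
      (fun i => Bᶜ ∩ {ω | X ω = i}) := by
    intro a _ b _ hab
    apply Set.disjoint_left.mpr
    rintro ω ⟨_, ha⟩ ⟨_, hb⟩
    exact hab (ha.symm.trans hb)
  have hunion : μ (⋃ i ∈ Finset.Icc k (min M m_S), Bᶜ ∩ {ω | X ω = i})
      = ∑ i ∈ Finset.Icc k (min M m_S), μ (Bᶜ ∩ {ω | X ω = i}) :=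
    measure_biUnion_finset hdisj (fun i _ => hB.compl.inter (hSm i))
  calc (1 - ε) * ∑ i ∈ Finset.Icc k (min M m_S),
        (Nat.choose m_S i * Nat.choose (m - m_S) (M - i) : ℝ) / Nat.choose m M
      = ∑ i ∈ Finset.Icc k (min M m_S),
        (1 - ε) * ((Nat.choose m_S i * Nat.choose (m - m_S) (M - i) : ℝ) / Nat.choose m M) := by
        rw [Finset.mul_sum]
    _ ≤ ∑ i ∈ Finset.Icc k (min M m_S), (μ (Bᶜ ∩ {ω | X ω = i})).toReal :=
        Finset.sum_le_sum hkey
    _ = (μ (⋃ i ∈ Finset.Icc k (min M m_S), Bᶜ ∩ {ω | X ω = i})).toReal := by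
        rw [hunion, ENNReal.toReal_sum (fun i _ => measure_ne_top _ _)]
    _ ≤ (μ Bᶜ).toReal :=
        ENNReal.toReal_mono (measure_ne_top _ _)
          (measure_mono (Set.iUnion₂_subset fun i _ => Set.inter_subset_left))
end

section
/- Let m_G, m_S, M, k be natural numbers with m = m_G + m_S, M ≤ m, and k ≤ min(M, m_S), let ε ∈ [0,1] be real, and let a, b, c ≥ 0 be real parameters. Let (Ω, μ) be a probability space, B ⊆ Ω a measurable event, and X : Ω → ℕ a measurable random variable whose law is hypergeometric: for every natural number i, μ({ω : X ω = i}) = (C(m_S, i) · C(m − m_S, M − i)) / C(m, M) (with C(n, r) = 0 when r > n). Assume that for every i with i < k one has μ(B ∩ {ω : X ω = i}) ≤ (a·e^{−b·i} + c) · μ({ω : X ω = i}), and for every i with k ≤ i one has μ(B ∩ {ω : X ω = i}) ≤ ε · μ({ω : X ω = i}). Then μ(Bᶜ) ≥ ∑_{i=0}^{k−1} (1 − (a·e^{−b·i} + c)) · (C(m_S, i) · C(m − m_S, M − i)) / C(m, M) + (1 − ε) · ∑_{i=k}^{min(M, m_S)} (C(m_S, i) · C(m − m_S, M − i)) / C(m,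 M). -/
/-!
Split the sample space along the fibres `{X = i}`. On each fibre, subadditivity gives
`μ(Bᶜ ∩ {X = i}) ≥ μ{X = i} - μ(B ∩ {X = i})`, which the hypotheses bound below by
`(1 - (a e^{-b i} + c)) P(X = i)` for `i < k` and by `(1 - ε) P(X = i)` for `i ≥ k`; since the
fibres are disjoint and measurable, these lower bounds add up to at most `μ Bᶜ`.
-/

open MeasureTheory Finset

namespace MeasureTheory

variable {Ω β : Type*} [MeasurableSpace Ω] {μ : Measure Ω} [IsFiniteMeasure μ]

lemma measureReal_sub_measureReal_inter_le_measureReal_compl_inter (B F : Set Ω) :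
    μ.real F - μ.real (B ∩ F) ≤ μ.real (Bᶜ ∩ F) := by
  have hcover : F ⊆ (B ∩ F) ∪ (Bᶜ ∩ F) := fun ω hω => by
    by_cases hB : ω ∈ B
    exacts [Or.inl ⟨hB, hω⟩, Or.inr ⟨hB, hω⟩]
  linarith [(measureReal_mono hcover).trans (measureReal_union_le (μ := μ) (B ∩ F) (Bᶜ ∩ F))]

variable [MeasurableSpace β] [MeasurableSingletonClass β] {X : Ω → β}

-- `C` need not be measurable: the sum is taken for the measure `μ.restrict C`.
lemma sum_measureReal_inter_preimage_singleton_le (hX : Measurable X) (C : Set Ω)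
    (s : Finset β) : ∑ i ∈ s, μ.real (C ∩ X ⁻¹' {i}) ≤ μ.real C := by
  have hfibre : ∀ i, MeasurableSet (X ⁻¹' {i}) := fun i => hX (measurableSet_singleton i)
  calc ∑ i ∈ s, μ.real (C ∩ X ⁻¹' {i})
      = ∑ i ∈ s, (μ.restrict C).real (X ⁻¹' {i}) := by
        simp only [measureReal_restrict_apply (hfibre _), Set.inter_comm]
    _ = (μ.restrict C).real (X ⁻¹' s) := sum_measureReal_preimage_singleton s fun i _ => hfibre i
    _ ≤ (μ.restrict C).real Set.univ := measureReal_mono (Set.subset_univ _)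
    _ = μ.real C := measureReal_restrict_apply_univ C

lemma sum_measureReal_sub_measureReal_inter_le_measureReal_compl (hX : Measurable X)
    (B : Set Ω) (s : Finset β) :
    ∑ i ∈ s, (μ.real (X ⁻¹' {i}) - μ.real (B ∩ X ⁻¹' {i})) ≤ μ.real Bᶜ :=
  (sum_le_sum fun _ _ => measureReal_sub_measureReal_inter_le_measureReal_compl_inter B _).trans
    (sum_measureReal_inter_preimage_singleton_le hX Bᶜ s)

end MeasureTheory

theorem swap_certificate_tighter_lower_bound_general
    (m_S M k m : ℕ) (ε : ℝ) (a b c : ℝ)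
    {Ω : Type*} [MeasurableSpace Ω] (μ : Measure Ω) [IsProbabilityMeasure μ]
    (B : Set Ω)
    (X : Ω → ℕ) (hX : Measurable X)
    (hlaw : ∀ i : ℕ, (μ {ω | X ω = i}).toReal =
      (Nat.choose m_S i * Nat.choose (m - m_S) (M - i) : ℝ) / Nat.choose m M)
    (hsub : ∀ i : ℕ, i < k →
      (μ (B ∩ {ω | X ω = i})).toReal
        ≤ (a * Real.exp (-b * i) + c) * (μ {ω | X ω = i}).toReal)
    (hcond : ∀ i : ℕ, k ≤ i →
      (μ (B ∩ {ω | X ω = i})).toReal ≤ ε * (μ {ω | X ω = i}).toReal) :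
    (∑ i ∈ Finset.range k, (1 - (a * Real.exp (-b * i) + c)) *
        ((Nat.choose m_S i * Nat.choose (m - m_S) (M - i) : ℝ) / Nat.choose m M))
      + (1 - ε) * ∑ i ∈ Finset.Icc k (min M m_S),
        (Nat.choose m_S i * Nat.choose (m - m_S) (M - i) : ℝ) / Nat.choose m M
      ≤ (μ Bᶜ).toReal := by
  set defended : ℕ → ℝ := fun i => μ.real {ω | X ω = i} - μ.real (B ∩ {ω | X ω = i})
  have hdisj : Disjoint (range k) (Icc k (min M m_S)) :=
    disjoint_left.2 fun i hi hi' => by simp only [mem_range, mem_Icc] at hi hi'; omega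
  simp only [← hlaw, ← measureReal_def] at hsub hcond ⊢
  calc _ ≤ ∑ i ∈ range k, defended i + ∑ i ∈ Icc k (min M m_S), defended i := by
        rw [mul_sum]
        refine add_le_add (sum_le_sum fun i hi => ?_) (sum_le_sum fun i hi => ?_)
        · dsimp only [defended]; linarith [hsub i (mem_range.1 hi)]
        · dsimp only [defended]; linarith [hcond i (mem_Icc.1 hi).1]
    _ = ∑ i ∈ range k ∪ Icc k (min M m_S), defended i := (sum_union hdisj).symm
    _ ≤ μ.real Bᶜ := sum_measureReal_sub_measureReal_inter_le_measureReal_compl hX B _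

theorem swap_certificate_tighter_lower_bound
    (m_G m_S M k m : ℕ) (hm : m = m_G + m_S) (hM : M ≤ m) (hk : k ≤ min M m_S)
    (ε : ℝ) (hε0 : 0 ≤ ε) (hε1 : ε ≤ 1)
    (a b c : ℝ) (ha : 0 ≤ a) (hb : 0 ≤ b) (hc : 0 ≤ c)
    {Ω : Type*} [MeasurableSpace Ω] (μ : Measure Ω) [IsProbabilityMeasure μ]
    (B : Set Ω) (hB : MeasurableSet B)
    (X : Ω → ℕ) (hX : Measurable X)
    (hlaw : ∀ i : ℕ, (μ {ω | X ω = i}).toReal =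
      (Nat.choose m_S i * Nat.choose (m - m_S) (M - i) : ℝ) / Nat.choose m M)
    (hsub : ∀ i : ℕ, i < k →
      (μ (B ∩ {ω | X ω = i})).toReal
        ≤ (a * Real.exp (-b * i) + c) * (μ {ω | X ω = i}).toReal)
    (hcond : ∀ i : ℕ, k ≤ i →
      (μ (B ∩ {ω | X ω = i})).toReal ≤ ε * (μ {ω | X ω = i}).toReal) :
    (∑ i ∈ Finset.range k, (1 - (a * Real.exp (-b * i) + c)) *
        ((Nat.choose m_S i * Nat.choose (m - m_S) (M - i) : ℝ) / Nat.choose m M))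
      + (1 - ε) * ∑ i ∈ Finset.Icc k (min M m_S),
        (Nat.choose m_S i * Nat.choose (m - m_S) (M - i) : ℝ) / Nat.choose m M
      ≤ (μ Bᶜ).toReal :=
  swap_certificate_tighter_lower_bound_general m_S M k m ε a b c μ B X hX hlaw hsub hcond
end

section
/- Let m_G, m_S, M, k be natural numbers with m = m_G + m_S, 1 ≤ M ≤ m, and k ≤ M, let ε ∈ [0,1] be real, and let a, b, c ≥ 0 be real parameters. For a natural number s, define overlap(s) = min(s + M, m) − max(s, m_G) (truncated natural subtraction), and for each i let P_i = |{s ∈ {0, …, m − M} : overlap(s) = i}| / (m − M + 1). Let (Ω, μ) be a probability space, B ⊆ Ω a measurable event, and X : Ω → ℕ a measurable random variable with μ({ω : X ω = i}) = P_i for every i. Assume that for every i with i < k one has μ(B ∩ {ω : X ω = i}) ≤ (a·e^{−b·i} + c) · μ({ω : X ω = i}), and for every i with k ≤ i one has μ(B ∩ {ω : X ω = i}) ≤ ε · μ({ω : X ω = i}). Then μ(Bᶜ) ≥ ∑_{i=0}^{k−1} (1 − (a·e^{−b·i} + c)) · P_i + (1 − ε) · ∑_{i=k}^{M} P_i. 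-/
open MeasureTheory Finset

theorem patch_certificate_lower_bound
    (m_G m_S M k m : ℕ) (hm : m = m_G + m_S) (hM1 : 1 ≤ M) (hMm : M ≤ m) (hk : k ≤ M)
    (ε : ℝ) (hε0 : 0 ≤ ε) (hε1 : ε ≤ 1)
    (a b c : ℝ) (ha : 0 ≤ a) (hb : 0 ≤ b) (hc : 0 ≤ c)
    (overlap : ℕ → ℕ) (hoverlap : ∀ s, overlap s = min (s + M) m - max s m_G)
    (P : ℕ → ℝ)
    (hP : ∀ i, P i =
      (((Finset.range (m - M + 1)).filter (fun s => overlap s = i)).card : ℝ)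
        / (m - M + 1))
    {Ω : Type*} [MeasurableSpace Ω] (μ : Measure Ω) [IsProbabilityMeasure μ]
    (B : Set Ω) (hB : MeasurableSet B)
    (X : Ω → ℕ) (hX : Measurable X)
    (hlaw : ∀ i : ℕ, (μ {ω | X ω = i}).toReal = P i)
    (hsub : ∀ i : ℕ, i < k →
      (μ (B ∩ {ω | X ω = i})).toReal
        ≤ (a * Real.exp (-b * i) + c) * (μ {ω | X ω = i}).toReal)
    (hcond : ∀ i : ℕ, k ≤ i →
      (μ (B ∩ {ω | X ω = i})).toReal ≤ ε * (μ {ω | X ω = i}).toReal) :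
    (∑ i ∈ Finset.range k, (1 - (a * Real.exp (-b * i) + c)) * P i)
      + (1 - ε) * ∑ i ∈ Finset.Icc k M, P i
      ≤ (μ Bᶜ).toReal := by
  have hmeas : ∀ i : ℕ, MeasurableSet {ω | X ω = i} :=
    fun i => hX (measurableSet_singleton i)
  set f : ℕ → ℝ := fun i => (μ (Bᶜ ∩ {ω | X ω = i})).toReal with hf
  have hsplit : ∀ i : ℕ, (μ {ω | X ω = i}).toReal
      = (μ (B ∩ {ω | X ω = i})).toReal + f i := by
    intro i
    have h := measure_inter_add_diff {ω | X ω = i} hB (μ := μ)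
    have h2 : {ω | X ω = i} ∩ B = B ∩ {ω | X ω = i} := Set.inter_comm _ _
    have h3 : {ω | X ω = i} \ B = Bᶜ ∩ {ω | X ω = i} := by
      rw [Set.diff_eq, Set.inter_comm]
    rw [h2, h3] at h
    rw [← h, ENNReal.toReal_add (measure_ne_top _ _) (measure_ne_top _ _)]
  have hb1 : ∀ i ∈ Finset.range k,
      (1 - (a * Real.exp (-b * i) + c)) * P i ≤ f i := by
    intro i hi
    have hi' := Finset.mem_range.mp hi
    have h1 := hsub i hi'
    have h2 := hsplit i
    rw [hlaw i] at h1 h2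
    linarith
  have hb2 : ∀ i ∈ Finset.Icc k M, (1 - ε) * P i ≤ f i := by
    intro i hi
    have hi' : k ≤ i := (Finset.mem_Icc.mp hi).1
    have h1 := hcond i hi'
    have h2 := hsplit i
    rw [hlaw i] at h1 h2
    linarith
  have hsum : ∑ i ∈ Finset.range (M + 1), f i ≤ (μ Bᶜ).toReal := by
    have hdisj : (Finset.range (M + 1) : Set ℕ).PairwiseDisjoint
        (fun i => Bᶜ ∩ {ω | X ω = i}) := by
      intro i _ j _ hij
      refine Set.disjoint_left.mpr fun ω hωi hωj => hij ?_
      rw [← hωi.2, ← hωj.2]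
    have hm' : ∀ i ∈ Finset.range (M + 1), MeasurableSet (Bᶜ ∩ {ω | X ω = i}) :=
      fun i _ => hB.compl.inter (hmeas i)
    have h1 := measure_biUnion_finset hdisj hm' (μ := μ)
    have h2 : μ (⋃ i ∈ Finset.range (M + 1), Bᶜ ∩ {ω | X ω = i}) ≤ μ Bᶜ := by
      apply measure_mono
      simp only [Set.iUnion_subset_iff]
      intro i _
      exact Set.inter_subset_left
    calc ∑ i ∈ Finset.range (M + 1), f i
        = (∑ i ∈ Finset.range (M + 1), μ (Bᶜ ∩ {ω | X ω = i})).toReal := by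
          rw [ENNReal.toReal_sum (fun i _ => measure_ne_top _ _)]
      _ ≤ (μ Bᶜ).toReal := by
          rw [← h1]
          exact ENNReal.toReal_mono (measure_ne_top _ _) h2
  have hdisjF : Disjoint (Finset.range k) (Finset.Icc k M) := by
    rw [Finset.disjoint_left]
    intro i hi hi'
    exact absurd (Finset.mem_Icc.mp hi').1 (Nat.not_le.mpr (Finset.mem_range.mp hi))
  have hunion : Finset.range k ∪ Finset.Icc k M = Finset.range (M + 1) := by
    ext x
    simp only [Finset.mem_union, Finset.mem_range, Finset.mem_Icc, Nat.lt_succ_iff]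
    omega
  calc (∑ i ∈ Finset.range k, (1 - (a * Real.exp (-b * i) + c)) * P i)
      + (1 - ε) * ∑ i ∈ Finset.Icc k M, P i
      = (∑ i ∈ Finset.range k, (1 - (a * Real.exp (-b * i) + c)) * P i)
        + ∑ i ∈ Finset.Icc k M, (1 - ε) * P i := by rw [Finset.mul_sum]
    _ ≤ (∑ i ∈ Finset.range k, f i) + ∑ i ∈ Finset.Icc k M, f i :=
        add_le_add (Finset.sum_le_sum hb1) (Finset.sum_le_sum hb2)
    _ = ∑ i ∈ Finset.range k ∪ Finset.Icc k M, f i := (Finset.sum_union hdisjF).symm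
    _ = ∑ i ∈ Finset.range (M + 1), f i := by rw [hunion]
    _ ≤ (μ Bᶜ).toReal := hsum
end
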